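/- arXiv:2604.12052 — 4 statements merged into one kernel-verified Lean document; each statement's English description precedes it below -/
import Mathlib

section
/- Let f : (0,∞) → ℝ be a measurable function bounded above by ln M for some M ≥ 1, and suppose ω_c > 0 is a point at which the function ω ↦ f(ω)/ω² attains its supremum over (0,∞). If ∫₀^∞ f(ω)/ω² dω ≥ K for some K ≥ 0, then M ≥ exp(ω_c · K / 2). -/
/-!
Split `∫₀^∞ f ω / ω² dω` at `ω_c`. On `(0, ω_c]` the integrand is at most its maximum
`f ω_c / ω_c² ≤ ln M / ω_c²`, so that piece is at most `ln M / ω_c`; on `(ω_c, ∞)` it is at most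
`ln M / ω²`, whose integral is again `ln M / ω_c`. Hence `K ≤ 2 ln M / ω_c`.
-/

open MeasureTheory Set

lemma setIntegral_Ioc_le_sub_mul {g : ℝ → ℝ} {a b C : ℝ} (hab : a ≤ b)
    (hg : IntegrableOn g (Ioc a b)) (hC : ∀ x ∈ Ioc a b, g x ≤ C) :
    ∫ x in Ioc a b, g x ≤ (b - a) * C := by
  have hconst : IntegrableOn (fun _ ↦ C) (Ioc a b) := integrableOn_const (by simp)
  calc ∫ x in Ioc a b, g x ≤ ∫ _ in Ioc a b, C := setIntegral_mono_on hg hconst measurableSet_Ioc hC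
    _ = (b - a) * C := by
      rw [setIntegral_const, measureReal_def, Real.volume_Ioc, ENNReal.toReal_ofReal (by linarith),
        smul_eq_mul]

lemma setIntegral_Ioi_div_sq_le {f : ℝ → ℝ} {L c : ℝ} (hc : 0 < c)
    (hf : IntegrableOn (fun x ↦ f x / x ^ 2) (Ioi c)) (hL : ∀ x ∈ Ioi c, f x ≤ L) :
    ∫ x in Ioi c, f x / x ^ 2 ≤ L / c := by
  have hmaj : IntegrableOn (fun x : ℝ ↦ L * x ^ (-2 : ℝ)) (Ioi c) :=
    (integrableOn_Ioi_rpow_of_lt (by norm_num) hc).const_mul L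
  calc ∫ x in Ioi c, f x / x ^ 2 ≤ ∫ x in Ioi c, L * x ^ (-2 : ℝ) := by
        refine setIntegral_mono_on hf hmaj measurableSet_Ioi fun x hx ↦ ?_
        have hx0 : 0 < x := hc.trans hx
        rw [Real.rpow_neg hx0.le, Real.rpow_two, ← div_eq_mul_inv]
        exact div_le_div_of_nonneg_right (hL x hx) (by positivity)
    _ = L / c := by
      rw [integral_const_mul, integral_Ioi_rpow_of_lt (by norm_num) hc]
      norm_num [Real.rpow_neg_one, div_eq_mul_inv]

lemma setIntegral_Ioi_zero_div_sq_le {f : ℝ → ℝ} {L c : ℝ} (hL₀ : 0 ≤ L) (hc : 0 < c)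
    (hL : ∀ x ∈ Ioi (0 : ℝ), f x ≤ L) (hmax : ∀ x ∈ Ioi (0 : ℝ), f x / x ^ 2 ≤ f c / c ^ 2) :
    ∫ x in Ioi (0 : ℝ), f x / x ^ 2 ≤ 2 * L / c := by
  by_cases hint : IntegrableOn (fun x ↦ f x / x ^ 2) (Ioi 0)
  · have hnear : ∫ x in Ioc 0 c, f x / x ^ 2 ≤ L / c :=
      calc ∫ x in Ioc 0 c, f x / x ^ 2 ≤ (c - 0) * (f c / c ^ 2) :=
            setIntegral_Ioc_le_sub_mul hc.le (hint.mono_set Ioc_subset_Ioi_self)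
              fun x hx ↦ hmax x hx.1
        _ = f c / c := by rw [sub_zero]; field_simp
        _ ≤ L / c := by gcongr; exact hL c hc
    have hfar : ∫ x in Ioi c, f x / x ^ 2 ≤ L / c :=
      setIntegral_Ioi_div_sq_le hc (hint.mono_set (Ioi_subset_Ioi hc.le))
        fun x hx ↦ hL x (hc.trans hx)
    rw [← Ioc_union_Ioi_eq_Ioi hc.le, setIntegral_union (Ioc_disjoint_Ioi le_rfl) measurableSet_Ioi
      (hint.mono_set Ioc_subset_Ioi_self) (hint.mono_set (Ioi_subset_Ioi hc.le))]
    linarith [show 2 * L / c = L / c + L / c by ring]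
  · rw [integral_undef hint]
    positivity

theorem stmt0_general (f : ℝ → ℝ) (M K ωc : ℝ)
    (hM : 1 ≤ M)
    (hbound : ∀ ω ∈ Ioi (0:ℝ), f ω ≤ Real.log M)
    (hωc : 0 < ωc)
    (hsup : ∀ ω ∈ Ioi (0:ℝ), f ω / ω ^ 2 ≤ f ωc / ωc ^ 2)
    (hint : K ≤ ∫ ω in Ioi (0:ℝ), f ω / ω ^ 2) :
    Real.exp (ωc * K / 2) ≤ M := by
  have hK : K ≤ 2 * Real.log M / ωc :=
    hint.trans (setIntegral_Ioi_zero_div_sq_le (Real.log_nonneg hM) hωc hbound hsup)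
  have hexponent : ωc * K / 2 ≤ Real.log M := by
    rw [le_div_iff₀ hωc] at hK
    linarith
  calc Real.exp (ωc * K / 2) ≤ Real.exp (Real.log M) := Real.exp_le_exp.2 hexponent
    _ = M := Real.exp_log (by linarith)

theorem stmt0 (f : ℝ → ℝ) (M K ωc : ℝ)
    (hf : Measurable f) (hM : 1 ≤ M)
    (hbound : ∀ ω ∈ Ioi (0:ℝ), f ω ≤ Real.log M)
    (hωc : 0 < ωc)
    (hsup : ∀ ω ∈ Ioi (0:ℝ), f ω / ω ^ 2 ≤ f ωc / ωc ^ 2)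
    (hK : 0 ≤ K)
    (hint : K ≤ ∫ ω in Ioi (0:ℝ), f ω / ω ^ 2) :
    Real.exp (ωc * K / 2) ≤ M :=
  stmt0_general f M K ωc hM hbound hωc hsup hint
end

section
/- Let A, B, P, Q be N×N complex matrices, α, β ∈ ℂ, and set γ = α + iβ, γ̄ = α − iβ, Y = A + iB, Y' = A − iB, S = P + iQ, S' = P − iQ. With W = ((1/√2)·[[1,i],[1,-i]]) ⊗ I_N, the block matrix J = [[α,β],[-β,α]] ⊗ A + [[β,-α],[α,β]] ⊗ B + [[-Q,P],[P,Q]] (where the last term denotes the 2N×2N block matrix with blocks -Q, P; P, Q) satisfies W J W⁻¹ = [[γ̄·Y, i·S],[-i·S', γ·Y']]. -/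
open Matrix Complex

/-!
Up to the factor `1/√2`, `W` is the block matrix `W₀ = [[1, i], [1, -i]] ⊗ I`, which sends a real
pair `(x, y)` to the conjugate pair `(x + i y, x - i y)`, and `W₀ V₀ = 2` for
`V₀ = [[1, 1], [-i, i]] ⊗ I`. So `W⁻¹ = V₀ / √2` and `W J W⁻¹ = W₀ J V₀ / 2`. Blockwise,
`W₀ J = R W₀` for the claimed right-hand side `R`: this is a linear identity in `A, B, P, Q`
whose coefficients agree once `i² = -1` is used. Hence `W J W⁻¹ = R W₀ V₀ / 2 = R`.
-/

section

variable {n R : Type*} [Fintype n] [DecidableEq n] [CommRing R]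

theorem fromBlocks_smul_one_mul_fromBlocks (a b c d : R) (A B C D : Matrix n n R) :
    fromBlocks (a • 1) (b • 1) (c • 1) (d • 1) * fromBlocks A B C D =
      fromBlocks (a • A + b • C) (a • B + b • D) (c • A + d • C) (c • B + d • D) := by
  simp only [fromBlocks_multiply, smul_mul, Matrix.one_mul]

theorem fromBlocks_mul_fromBlocks_smul_one (a b c d : R) (A B C D : Matrix n n R) :
    fromBlocks A B C D * fromBlocks (a • 1) (b • 1) (c • 1) (d • 1) =
      fromBlocks (a • A + c • B) (b • A + d • B) (a • C + c • D) (b • C + d • D) := by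
  simp only [fromBlocks_multiply, Matrix.mul_smul, Matrix.mul_one]

end

section

variable {n : Type*} [Fintype n] [DecidableEq n]

noncomputable def conjPairBlocks (n : Type*) [DecidableEq n] : Matrix (n ⊕ n) (n ⊕ n) ℂ :=
  fromBlocks ((1 : ℂ) • 1) (I • 1) ((1 : ℂ) • 1) ((-I) • 1)

noncomputable def conjPairBlocksAdjoint (n : Type*) [DecidableEq n] :
    Matrix (n ⊕ n) (n ⊕ n) ℂ :=
  fromBlocks ((1 : ℂ) • 1) ((1 : ℂ) • 1) ((-I) • 1) (I • 1)

theorem conjPairBlocks_mul_adjoint :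
    conjPairBlocks n * conjPairBlocksAdjoint n = (2 : ℂ) • 1 := by
  rw [conjPairBlocks, conjPairBlocksAdjoint, fromBlocks_smul_one_mul_fromBlocks,
    ← fromBlocks_one, fromBlocks_smul]
  congr 1 <;> match_scalars <;> grind [I_sq]

theorem conjPairBlocks_mul_jacobian (A B P Q : Matrix n n ℂ) (α β : ℂ) :
    conjPairBlocks n *
        (fromBlocks (α • A) (β • A) ((-β) • A) (α • A)
          + fromBlocks (β • B) ((-α) • B) (α • B) (β • B) + fromBlocks (-Q) P P Q) =
      fromBlocks ((α - I * β) • (A + I • B)) (I • (P + I • Q))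
          ((-I) • (P - I • Q)) ((α + I * β) • (A - I • B)) * conjPairBlocks n := by
  rw [fromBlocks_add, fromBlocks_add, conjPairBlocks, fromBlocks_smul_one_mul_fromBlocks,
    fromBlocks_mul_fromBlocks_smul_one]
  congr 1 <;> match_scalars <;> grind [I_sq]

end

/-- the similarity transformation W J W⁻¹ for the network Jacobian.
Kronecker products with 2×2 matrices are written as 2N×2N block matrices
(`Matrix.fromBlocks`), as indicated in the context. -/
theorem stmt3 {N : ℕ} (A B P Q : Matrix (Fin N) (Fin N) ℂ) (α β : ℂ)
    (γ γbar : ℂ) (hγ : γ = α + I * β) (hγbar : γbar = α - I * β)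
    (Y Y' S S' : Matrix (Fin N) (Fin N) ℂ)
    (hY : Y = A + I • B) (hY' : Y' = A - I • B)
    (hS : S = P + I • Q) (hS' : S' = P - I • Q)
    (W J : Matrix (Fin N ⊕ Fin N) (Fin N ⊕ Fin N) ℂ)
    (hW : W = fromBlocks ((1 / Real.sqrt 2 : ℂ) • 1) (((I : ℂ) / Real.sqrt 2) • 1)
        ((1 / Real.sqrt 2 : ℂ) • 1) ((-(I : ℂ) / Real.sqrt 2) • 1))
    (hJ : J = fromBlocks (α • A) (β • A) ((-β) • A) (α • A)
        + fromBlocks (β • B) ((-α) • B) (α • B) (β • B)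
        + fromBlocks (-Q) P P Q) :
    W * J * W⁻¹ = fromBlocks (γbar • Y) (I • S) ((-I) • S') (γ • Y') := by
  set c : ℂ := 1 / Real.sqrt 2
  have hc : c * c * 2 = 1 := by
    have h2 : (Real.sqrt 2 : ℂ) * Real.sqrt 2 = 2 := by
      exact_mod_cast Real.mul_self_sqrt zero_le_two
    rw [div_mul_div_comm, one_mul, h2, one_div_mul_cancel two_ne_zero]
  have hW₀ : W = c • conjPairBlocks (Fin N) := by
    rw [hW, conjPairBlocks, fromBlocks_smul]
    simp only [smul_smul, c]
    ring_nf
  have hWinv : W⁻¹ = c • conjPairBlocksAdjoint (Fin N) := by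
    refine inv_eq_right_inv ?_
    rw [hW₀, smul_mul_smul, conjPairBlocks_mul_adjoint, smul_smul, hc, one_smul]
  subst hγ hγbar hY hY' hS hS' hJ
  calc W * _ * W⁻¹
      = (c * c) • (conjPairBlocks (Fin N) * _ * conjPairBlocksAdjoint (Fin N)) := by
        rw [hWinv, hW₀, smul_mul, smul_mul_smul]
    _ = _ := by
        rw [conjPairBlocks_mul_jacobian, Matrix.mul_assoc, conjPairBlocks_mul_adjoint,
          Matrix.mul_smul, Matrix.mul_one, smul_smul, hc, one_smul]
end

section
/- Let Y, Y', S, S' be N×N complex matrices with S, S', Y' invertible, and let a, b ∈ ℂ be nonzero. Then det([[a·Y, i·S],[-i·S', b·Y']]) = 0 if and only if 1/(ab) is an eigenvalue of S⁻¹ Y (S')⁻¹ Y'. -/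
open Matrix Complex

theorem stmt4 {N : ℕ} (Y Y' S S' : Matrix (Fin N) (Fin N) ℂ)
    (hS : IsUnit S.det) (hS' : IsUnit S'.det) (hY' : IsUnit Y'.det)
    (a b : ℂ) (ha : a ≠ 0) (hb : b ≠ 0) :
    (fromBlocks (a • Y) (I • S) ((-I) • S') (b • Y')).det = 0 ↔
      Module.End.HasEigenvalue
        (Matrix.toLin' (S⁻¹ * Y * S'⁻¹ * Y')) (1 / (a * b)) := by
  set M : Matrix (Fin N) (Fin N) ℂ := S⁻¹ * Y * S'⁻¹ * Y' with hM
  set c : ℂ := 1 / (a * b) with hc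
  -- RHS reformulation
  have hRHS : Module.End.HasEigenvalue (Matrix.toLin' M) c ↔ (c • 1 - M).det = 0 := by
    rw [Module.End.hasEigenvalue_iff_mem_spectrum]
    have h0 : Matrix.toLin' M = Matrix.toLinAlgEquiv' M := rfl
    rw [h0, AlgEquiv.spectrum_eq, spectrum.mem_iff]
    have halg : (algebraMap ℂ (Matrix (Fin N) (Fin N) ℂ)) c = c • 1 := by
      simp [Algebra.algebraMap_eq_smul_one]
    rw [halg, Matrix.isUnit_iff_isUnit_det, isUnit_iff_ne_zero, not_not]
  -- block determinant setup
  have hDdet : IsUnit (b • Y').det := by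
    simp only [det_smul, Fintype.card_fin]
    exact (IsUnit.pow N (isUnit_iff_ne_zero.mpr hb)).mul hY'
  haveI : Invertible (b • Y') := (b • Y').invertibleOfIsUnitDet hDdet
  haveI : Invertible b := invertibleOfNonzero hb
  have hinv : (b • Y')⁻¹ = b⁻¹ • Y'⁻¹ := by
    rw [Matrix.inv_smul (A := Y') b hY', invOf_eq_inv]
  have hSS : S * S⁻¹ = 1 := mul_nonsing_inv S hS
  have hS'S' : S'⁻¹ * S' = 1 := nonsing_inv_mul S' hS'
  have hY'Y' : Y' * Y'⁻¹ = 1 := mul_nonsing_inv Y' hY'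
  have hSchur : a • Y - (I • S) * ⅟(b • Y') * ((-I) • S')
      = (-a) • (S * (c • 1 - M) * (Y'⁻¹ * S')) := by
    rw [invOf_eq_nonsing_inv, hinv]
    have hSM : S * M = Y * S'⁻¹ * Y' := by
      rw [hM, show S * (S⁻¹ * Y * S'⁻¹ * Y') = S * S⁻¹ * (Y * S'⁻¹ * Y') by
        simp only [Matrix.mul_assoc], hSS, Matrix.one_mul]
    have expand : S * (c • 1 - M) * (Y'⁻¹ * S')
        = c • (S * Y'⁻¹ * S') - Y := by
      rw [Matrix.mul_sub, Matrix.sub_mul, Matrix.mul_smul, Matrix.mul_one, Matrix.smul_mul]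
      congr 1
      · simp only [Matrix.mul_assoc]
      · calc S * M * (Y'⁻¹ * S') = Y * S'⁻¹ * (Y' * Y'⁻¹) * S' := by
              rw [hSM]; simp only [Matrix.mul_assoc]
          _ = Y := by rw [hY'Y', Matrix.mul_one, Matrix.mul_assoc, hS'S', Matrix.mul_one]
    rw [expand, smul_sub, smul_smul, neg_smul a Y, sub_neg_eq_add]
    have hBDC : (I • S) * (b⁻¹ • Y'⁻¹) * ((-I) • S')
        = b⁻¹ • (S * Y'⁻¹ * S') := by
      rw [Matrix.smul_mul, Matrix.smul_mul, Matrix.mul_smul, Matrix.mul_smul,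
        Matrix.smul_mul, smul_smul, smul_smul]
      congr 1
      rw [mul_neg, Complex.I_mul_I, neg_neg, one_mul]
    rw [hBDC]
    have hac : -a * c = -b⁻¹ := by
      rw [hc]; field_simp
    rw [hac, neg_smul, ← sub_eq_neg_add]
  have hz : (Y'⁻¹ * S').det ≠ 0 := by
    rw [Matrix.det_mul]
    exact mul_ne_zero (Matrix.isUnit_nonsing_inv_det Y' hY').ne_zero hS'.ne_zero
  have hfac : ((-a) • (S * (c • 1 - M) * (Y'⁻¹ * S'))).det
      = (-a) ^ N * (S.det * (c • 1 - M).det * (Y'⁻¹ * S').det) := by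
    rw [Matrix.det_smul, Fintype.card_fin, Matrix.det_mul, Matrix.det_mul]
  rw [Matrix.det_fromBlocks₂₂, hSchur, hfac, hRHS]
  simp only [mul_eq_zero, hDdet.ne_zero, hS.ne_zero, hz, pow_eq_zero_iff', neg_eq_zero, ha,
    false_and, false_or, or_false]
end

section
/- Let B be a real symmetric positive definite N×N matrix and D a diagonal complex N×N matrix. Then every eigenvalue λ of the complex matrix D B D̄ B (where D̄ is the entrywise conjugate of D) is real and satisfies λ ≥ 0. -/
/-!
If `A = D B D̄ B` and `A v = μ v` with `v ≠ 0`, then `B A = (D̄ B)ᴴ B (D̄ B)` because `D̄ = Dᴴ` for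
diagonal `D`. Hence `μ ⟪v, B v⟫ = ⟪w, B w⟫` with `w = D̄ B v`. The real positive definite `B` stays
positive definite over `ℂ`, so the left form is a positive real and the right one a nonnegative
real, which forces `μ ≥ 0`.
-/

open Matrix

open scoped ComplexOrder

namespace Matrix

variable {n : Type*} [Fintype n]

lemma star_dotProduct_map_ofReal_mulVec {B : Matrix n n ℝ} (hB : B.IsSymm) (x : n → ℂ) :
    star x ⬝ᵥ B.map Complex.ofReal *ᵥ x =
      ((Complex.re ∘ x) ⬝ᵥ B *ᵥ (Complex.re ∘ x)
        + (Complex.im ∘ x) ⬝ᵥ B *ᵥ (Complex.im ∘ x) : ℝ) := by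
  set a : n → ℝ := Complex.re ∘ x
  set b : n → ℝ := Complex.im ∘ x
  have hx : x = Complex.ofReal ∘ a + Complex.I • (Complex.ofReal ∘ b) := by
    ext i; simp [a, b, Complex.ext_iff]
  have hstar : star x = Complex.ofReal ∘ a - Complex.I • (Complex.ofReal ∘ b) := by
    ext i; simp [a, b, Complex.ext_iff]
  have hcross : b ⬝ᵥ B *ᵥ a = a ⬝ᵥ B *ᵥ b := by
    rw [dotProduct_mulVec, ← mulVec_transpose, hB.eq, dotProduct_comm]
  have hreal (u v : n → ℝ) : Complex.ofReal ∘ u ⬝ᵥ B.map Complex.ofReal *ᵥ (Complex.ofReal ∘ v)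
      = ((u ⬝ᵥ B *ᵥ v : ℝ) : ℂ) := by
    have hmulVec : B.map Complex.ofReal *ᵥ (Complex.ofReal ∘ v) = Complex.ofReal ∘ (B *ᵥ v) :=
      funext fun i => (RingHom.map_mulVec Complex.ofRealHom B v i).symm
    rw [hmulVec]
    exact (RingHom.map_dotProduct Complex.ofRealHom u (B *ᵥ v)).symm
  rw [hstar, hx]
  simp only [mulVec_add, mulVec_smul, sub_dotProduct, dotProduct_add, smul_dotProduct,
    dotProduct_smul, hreal, hcross]
  push_cast
  linear_combination (-((b ⬝ᵥ B *ᵥ b : ℝ) : ℂ)) * Complex.I_sq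

lemma PosDef.map_ofReal {B : Matrix n n ℝ} (hB : B.PosDef) : (B.map Complex.ofReal).PosDef := by
  have hsymm : B.IsSymm := isHermitian_iff_isSymm.1 hB.isHermitian
  refine .of_dotProduct_mulVec_pos (hB.isHermitian.map _ fun r => (Complex.conj_ofReal r).symm)
    fun x hx => ?_
  rw [star_dotProduct_map_ofReal_mulVec hsymm, Complex.zero_lt_real]
  have hparts : Complex.re ∘ x ≠ 0 ∨ Complex.im ∘ x ≠ 0 := by
    by_contra! h
    exact hx (funext fun i => Complex.ext (congrFun h.1 i) (congrFun h.2 i))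
  have hpos {u : n → ℝ} (hu : u ≠ 0) : 0 < u ⬝ᵥ B *ᵥ u := by
    simpa only [star_trivial] using hB.dotProduct_mulVec_pos hu
  have hnonneg (u : n → ℝ) : 0 ≤ u ⬝ᵥ B *ᵥ u := by
    simpa only [star_trivial] using hB.posSemidef.dotProduct_mulVec_nonneg u
  rcases hparts with hre | him
  · exact add_pos_of_pos_of_nonneg (hpos hre) (hnonneg _)
  · exact add_pos_of_nonneg_of_pos (hnonneg _) (hpos him)

variable {R : Type*} [Ring R] [PartialOrder R] [StarRing R]

lemma PosDef.posSemidef_mul_conjTranspose_mul_mul_mul {P : Matrix n n R} (hP : P.PosDef)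
    (C : Matrix n n R) : (P * (Cᴴ * P * C * P)).PosSemidef := by
  have h := hP.posSemidef.conjTranspose_mul_mul_same (C * P)
  rw [conjTranspose_mul, hP.isHermitian.eq] at h
  simpa only [Matrix.mul_assoc] using h

lemma PosDef.nonneg_of_posSemidef_mul_of_hasEigenvalue {𝕜 : Type*} [RCLike 𝕜] [DecidableEq n]
    {P A : Matrix n n 𝕜} (hP : P.PosDef) (hPA : (P * A).PosSemidef) {μ : 𝕜}
    (hμ : Module.End.HasEigenvalue (toLin' A) μ) : 0 ≤ μ := by
  obtain ⟨v, hv⟩ := hμ.exists_hasEigenvector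
  have hAv : A *ᵥ v = μ • v := by simpa using hv.apply_eq_smul
  have hq : 0 < star v ⬝ᵥ P *ᵥ v := hP.dotProduct_mulVec_pos hv.2
  have hPAv : star v ⬝ᵥ (P * A) *ᵥ v = μ * (star v ⬝ᵥ P *ᵥ v) := by
    rw [← mulVec_mulVec, hAv, mulVec_smul, dotProduct_smul, smul_eq_mul]
  have h := div_nonneg (hPAv ▸ hPA.dotProduct_mulVec_nonneg v) hq.le
  rwa [mul_div_cancel_right₀ _ hq.ne'] at h

end Matrix

theorem stmt7_general {N : ℕ} (B : Matrix (Fin N) (Fin N) ℝ)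
    (hB : B.PosDef)
    (d : Fin N → ℂ) (D : Matrix (Fin N) (Fin N) ℂ) (hD : D = diagonal d)
    (Dc Bc : Matrix (Fin N) (Fin N) ℂ)
    (hDc : Dc = D.map (starRingEnd ℂ)) (hBc : Bc = B.map (Complex.ofReal)) :
    ∀ μ : ℂ, Module.End.HasEigenvalue (Matrix.toLin' (D * Bc * Dc * Bc)) μ →
      ∃ x : ℝ, 0 ≤ x ∧ μ = (x : ℂ) := by
  intro μ hμ
  have hBc_posDef : Bc.PosDef := hBc ▸ hB.map_ofReal
  have hD_eq : D = Dcᴴ := by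
    rw [hDc, hD, diagonal_map (map_zero _), diagonal_conjTranspose]
    simp
  rw [hD_eq] at hμ
  have hμ_nonneg : 0 ≤ μ := hBc_posDef.nonneg_of_posSemidef_mul_of_hasEigenvalue
    (hBc_posDef.posSemidef_mul_conjTranspose_mul_mul_mul Dc) hμ
  exact ⟨μ.re, (Complex.nonneg_iff.1 hμ_nonneg).1,
    Complex.eq_re_of_ofReal_le (by exact_mod_cast hμ_nonneg)⟩

theorem stmt7 {N : ℕ} (B : Matrix (Fin N) (Fin N) ℝ)
    (hBsym : B.IsSymm) (hB : B.PosDef)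
    (d : Fin N → ℂ) (D : Matrix (Fin N) (Fin N) ℂ) (hD : D = diagonal d)
    (Dc Bc : Matrix (Fin N) (Fin N) ℂ)
    (hDc : Dc = D.map (starRingEnd ℂ)) (hBc : Bc = B.map (Complex.ofReal)) :
    ∀ μ : ℂ, Module.End.HasEigenvalue (Matrix.toLin' (D * Bc * Dc * Bc)) μ →
      ∃ x : ℝ, 0 ≤ x ∧ μ = (x : ℂ) :=
  stmt7_general B hB d D hD Dc Bc hDc hBc
end
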